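/- On the subshift X_m (real numbers in [0,1] whose binary expansion contains no m+1 consecutive equal digits), the potential ψ is Lipschitz continuous with respect to the shift metric ρ_2 with Lipschitz constant 2^{m+2}, where ρ_2(x,y) = 2^{-k} with k the largest integer such that the binary digits of x and y agree up to position k. -/

import Mathlib

/-!
Every sequence in `Xm m` has a digit `1` among its first `m + 1` digits, and so does its
bitwise complement; since `val x + val (!x) = 1`, this keeps `val x` in `[a, 1 - a]` with
`a = 2^-(m+1)`. There `1 - cos (2πt) = 2 sin² (πt)`, so `ψ' t = 2π cot (πt)`, and Jordan's
inequality `sin (πt) ≥ 2a` bounds `|ψ'|` by `π / a ≤ 4 · 2^(m+1)`. Sequences agreeing up to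
digit `k` have values within `2^-(k+1)`, and the mean value theorem gives the bound.
-/

noncomputable def psi (x : ℝ) : ℝ := Real.log (1 - Real.cos (2 * Real.pi * x))

/-- The real number in `[0,1]` with binary digit sequence `x`. -/
noncomputable def val (x : ℕ → Bool) : ℝ := ∑' i : ℕ, (if x i then (1:ℝ) else 0) / 2 ^ (i + 1)

/-- Binary sequences with no `m+1` consecutive equal digits. -/
def Xm (m : ℕ) : Set (ℕ → Bool) := {x | ∀ ℓ : ℕ, ¬ (∀ j ≤ m, x (ℓ + j) = x ℓ)}

open Real Set

def binaryDigits (x : ℕ → Bool) : ℕ → Fin 2 := fun i => if x i then 1 else 0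

lemma val_term_eq_ofDigitsTerm (x : ℕ → Bool) :
    (fun i => (if x i then (1:ℝ) else 0) / 2 ^ (i + 1)) = ofDigitsTerm (binaryDigits x) := by
  ext i
  by_cases h : x i <;> simp [ofDigitsTerm, binaryDigits, h, div_eq_mul_inv]

lemma val_eq_ofDigits (x : ℕ → Bool) : val x = ofDigits (binaryDigits x) := by
  rw [val, val_term_eq_ofDigitsTerm, ofDigits]

lemma summable_val_term (x : ℕ → Bool) :
    Summable (fun i => (if x i then (1:ℝ) else 0) / 2 ^ (i + 1)) := by
  rw [val_term_eq_ofDigitsTerm]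
  exact summable_ofDigitsTerm

lemma abs_val_sub_val_le {x y : ℕ → Bool} {k : ℕ} (h : ∀ i ≤ k, x i = y i) :
    |val x - val y| ≤ (2 ^ (k + 1))⁻¹ := by
  rw [val_eq_ofDigits, val_eq_ofDigits]
  exact_mod_cast abs_ofDigits_sub_ofDigits_le fun i hi => by
    simp [binaryDigits, h i (Nat.le_of_lt_succ hi)]

lemma val_add_val_not (x : ℕ → Bool) : val x + val (fun i => !x i) = 1 := by
  rw [val, val, ← (summable_val_term x).tsum_add (summable_val_term _)]
  refine (tsum_congr fun i => ?_).trans (tsum_geometric_two' 1)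
  cases x i <;> simp [pow_succ, div_eq_mul_inv, mul_comm]

lemma inv_two_pow_le_val {x : ℕ → Bool} {i : ℕ} (h : x i = true) : (2 ^ (i + 1))⁻¹ ≤ val x := by
  rw [val]
  simpa [h] using (summable_val_term x).le_tsum i fun j _ => by positivity

lemma not_comp_mem_Xm {m : ℕ} {x : ℕ → Bool} (hx : x ∈ Xm m) : (fun i => !x i) ∈ Xm m :=
  fun ℓ h => hx ℓ fun j hj => by simpa using h j hj

lemma exists_le_eq_true_of_mem_Xm {m : ℕ} {x : ℕ → Bool} (hx : x ∈ Xm m) :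
    ∃ i ≤ m, x i = true := by
  by_contra! h
  exact hx 0 fun j hj => by simp [h j hj, h 0 (Nat.zero_le m)]

lemma val_mem_Icc_of_mem_Xm {m : ℕ} {x : ℕ → Bool} (hx : x ∈ Xm m) :
    val x ∈ Icc (2 ^ (m + 1))⁻¹ (1 - (2 ^ (m + 1))⁻¹) := by
  have lower : ∀ {z : ℕ → Bool}, z ∈ Xm m → (2 ^ (m + 1) : ℝ)⁻¹ ≤ val z := fun hz => by
    obtain ⟨i, him, hi⟩ := exists_le_eq_true_of_mem_Xm hz
    refine le_trans ?_ (inv_two_pow_le_val hi)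
    gcongr
    norm_num
  exact ⟨lower hx, by linarith [lower (not_comp_mem_Xm hx), val_add_val_not x]⟩

lemma one_sub_cos_two_mul (θ : ℝ) : 1 - cos (2 * θ) = 2 * sin θ ^ 2 := by
  rw [cos_two_mul, cos_sq']
  ring

lemma hasDerivAt_psi {t : ℝ} (ht : sin (π * t) ≠ 0) :
    HasDerivAt psi (2 * π * cos (π * t) / sin (π * t)) t := by
  have hne : 1 - cos (2 * π * t) ≠ 0 := by
    rw [mul_assoc, one_sub_cos_two_mul]
    positivity
  have hinner : HasDerivAt (fun s => 1 - cos (2 * π * s)) (sin (2 * π * t) * (2 * π)) t := by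
    simpa using ((hasDerivAt_id t).const_mul (2 * π)).cos.const_sub 1
  show HasDerivAt (fun s => log (1 - cos (2 * π * s))) _ t
  convert hinner.log hne using 1
  rw [mul_assoc 2 π t, one_sub_cos_two_mul, sin_two_mul]
  field_simp

lemma two_mul_le_sin_pi_mul {t : ℝ} (h0 : 0 ≤ t) (h1 : t ≤ 1 / 2) : 2 * t ≤ sin (π * t) := by
  have := mul_le_sin (x := π * t) (by positivity) (by nlinarith [pi_pos])
  rwa [← mul_assoc, div_mul_cancel₀ 2 pi_ne_zero] at this

lemma two_mul_le_sin_pi_mul_of_mem_Icc {a t : ℝ} (ha : 0 ≤ a) (ht : t ∈ Icc a (1 - a)) :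
    2 * a ≤ sin (π * t) := by
  rcases le_total t (1 / 2) with h | h
  · linarith [two_mul_le_sin_pi_mul (ha.trans ht.1) h, ht.1]
  · have := two_mul_le_sin_pi_mul (t := 1 - t) (by linarith [ht.2]) (by linarith)
    rw [show π * (1 - t) = π - π * t by ring, sin_pi_sub] at this
    linarith [ht.2]

lemma abs_psi_sub_psi_le {a u v : ℝ} (ha : 0 < a) (hu : u ∈ Icc a (1 - a))
    (hv : v ∈ Icc a (1 - a)) : |psi u - psi v| ≤ π / a * |u - v| := by
  have hsin : ∀ t ∈ Icc a (1 - a), 2 * a ≤ sin (π * t) :=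
    fun t ht => two_mul_le_sin_pi_mul_of_mem_Icc ha.le ht
  have hderiv_le : ∀ t ∈ Icc a (1 - a), ‖2 * π * cos (π * t) / sin (π * t)‖ ≤ π / a := by
    intro t ht
    have hs : 0 < sin (π * t) := by linarith [hsin t ht]
    rw [norm_div, norm_mul, Real.norm_of_nonneg (by positivity), Real.norm_of_nonneg hs.le,
      div_le_div_iff₀ hs ha]
    calc 2 * π * ‖cos (π * t)‖ * a ≤ 2 * π * 1 * a := by
          gcongr
          exact abs_cos_le_one _
      _ = π * (2 * a) := by ring
      _ ≤ π * sin (π * t) := by gcongr; exact hsin t ht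
  simpa only [Real.norm_eq_abs] using Convex.norm_image_sub_le_of_norm_hasDerivWithin_le
    (fun t ht => (hasDerivAt_psi (by linarith [hsin t ht])).hasDerivWithinAt) hderiv_le
    (convex_Icc a (1 - a)) hv hu

theorem psi_lipschitz_on_Xm (m : ℕ) :
    ∀ x y : ℕ → Bool, x ∈ Xm m → y ∈ Xm m →
      ∀ k : ℕ, (∀ i ≤ k, x i = y i) →
      |psi (val x) - psi (val y)| ≤ (2:ℝ) ^ (m + 2) * (1/2) ^ k := by
  intro x y hx hy k hk
  calc |psi (val x) - psi (val y)|
      ≤ π / (2 ^ (m + 1))⁻¹ * |val x - val y| :=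
        abs_psi_sub_psi_le (by positivity) (val_mem_Icc_of_mem_Xm hx) (val_mem_Icc_of_mem_Xm hy)
    _ ≤ 4 / (2 ^ (m + 1))⁻¹ * (2 ^ (k + 1))⁻¹ := by
        gcongr
        exacts [pi_le_four, abs_val_sub_val_le hk]
    _ = (2:ℝ) ^ (m + 2) * (1/2) ^ k := by
        rw [one_div_pow]
        field_simp
        ring
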